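/- arXiv:1006.0469 — 4 statements merged into one kernel-verified Lean document; each statement's English description precedes it below -/
import Mathlib

section
/- Let G be a bipartite graph on [n] ∪ [m] that is d-left-regular, and suppose that for every subset S ⊆ [n] with |S| ≤ k_max we have |Γ(S)| ≥ (d − Δ)|S|. Then for every such S, the number of unique neighbors of S (vertices in [m] with exactly one neighbor in S) is at least (d − 2Δ)|S|. -/
/-!
Double counting the edges between `S` and its neighbourhood `N = Γ(S)` gives
`∑_{v ∈ N} deg_S v = d |S|`. Every `v ∈ N` has `deg_S v ≥ 1`, and `deg_S v ≥ 2` unless `v` is a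
unique neighbour, so `2 |N| ≤ d |S| + |Γ₁(S)|`. Inserting `|N| ≥ (d - Δ) |S|` yields
`|Γ₁(S)| ≥ (d - 2Δ) |S|`.
-/

open Finset

namespace Finset

lemma two_mul_card_le_sum_add_card_filter_eq_one {ι : Type*} (s : Finset ι) (f : ι → ℕ)
    (hf : ∀ i ∈ s, f i ≠ 0) : 2 * #s ≤ ∑ i ∈ s, f i + #{i ∈ s | f i = 1} := by
  rw [card_filter, ← sum_add_distrib, mul_comm, ← smul_eq_mul, ← sum_const]
  refine sum_le_sum fun i hi => ?_
  have := hf i hi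
  split_ifs <;> omega

variable {α β : Type*} [DecidableEq β] (S : Finset α) (E : α → Finset β)

lemma sum_card_filter_mem_biUnion :
    ∑ v ∈ S.biUnion E, #{u ∈ S | v ∈ E u} = ∑ u ∈ S, #(E u) := by
  calc ∑ v ∈ S.biUnion E, #{u ∈ S | v ∈ E u}
      = ∑ u ∈ S, #((S.biUnion E).bipartiteAbove (fun u v => v ∈ E u) u) :=
        (sum_card_bipartiteAbove_eq_sum_card_bipartiteBelow _).symm
    _ = ∑ u ∈ S, #(E u) := sum_congr rfl fun u hu => by
        rw [bipartiteAbove, filter_mem_eq_inter, inter_eq_right.2 (subset_biUnion_of_mem E hu)]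

lemma two_mul_card_biUnion_le [Fintype β] :
    2 * #(S.biUnion E) ≤ ∑ u ∈ S, #(E u) + #({v | #{u ∈ S | v ∈ E u} = 1} : Finset β) := by
  have hdeg (v : β) : v ∈ S.biUnion E ↔ #{u ∈ S | v ∈ E u} ≠ 0 := by
    rw [card_ne_zero, filter_nonempty_iff, mem_biUnion]
  have hunique : {v ∈ S.biUnion E | #{u ∈ S | v ∈ E u} = 1} =
      ({v | #{u ∈ S | v ∈ E u} = 1} : Finset β) := by
    ext v
    simp only [mem_filter, mem_univ, true_and, hdeg, and_iff_right_iff_imp]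
    omega
  rw [← sum_card_filter_mem_biUnion, ← hunique]
  exact two_mul_card_le_sum_add_card_filter_eq_one _ _ fun v => (hdeg v).1

end Finset

/-- A `d`-left-regular bipartite graph on `[n] ∪ [m]` (given by the neighborhood map `E`)
which is a `(kmax, d - Δ)`-expander is a `(kmax, d - 2Δ)`-unique-neighbor expander. -/
theorem stmt0 (n m d Δ kmax : ℕ) (E : Fin n → Finset (Fin m))
    (hreg : ∀ u, (E u).card = d)
    (hexp : ∀ S : Finset (Fin n), S.card ≤ kmax →
      ((d : ℤ) - Δ) * S.card ≤ ((S.biUnion E).card : ℤ)) :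
    ∀ S : Finset (Fin n), S.card ≤ kmax →
      ((d : ℤ) - 2 * Δ) * S.card ≤
        ((Finset.univ.filter
          (fun v : Fin m => (S.filter (fun u => v ∈ E u)).card = 1)).card : ℤ) := by
  intro S hS
  have hcount := two_mul_card_biUnion_le S E
  rw [sum_congr rfl fun u _ => hreg u, sum_const, smul_eq_mul] at hcount
  have hcountℤ := (Nat.cast_le (α := ℤ)).2 hcount
  push_cast only [Nat.cast_add, Nat.cast_mul, Nat.cast_ofNat] at hcountℤ
  linarith [hexp S hS]
end

section
/- Let G be a (d,r)-biregular bipartite graph on [n] ∪ [m] (so nd = mr) that is an (ℓ, d−Δ)-unique-neighbor expander. Fix a tranche value function v: {0,...,r} → ℝ that is nondecreasing with v(g+i) − v(g) ≤ iδ for all g, i. For L ⊆ [n] with |L| = ℓ, define TV(L) = Σ_{j∈[m]} v(r − |Γ(j) ∩ L|). Then for any two subsets L, L' ⊆ [n] of size ℓ, |TV(L') − TV(L)| ≤ 2Δℓδ. -/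
/-!
Let `c_j` be the number of lemons among the assets of CDO `j` and `D = v r - v (r - 1)`,
so `0 ≤ D ≤ δ`. A CDO with exactly one lemon loses exactly `D` of its value, any other one loses
between `0` and `c_j δ`. With `U` unique neighbours of the lemon set and `∑ c_j = dℓ`, the total
loss lies in `[U D, U D + (dℓ - U) δ]`, and `U ≥ (d - Δ) ℓ` confines it to
`[(d - Δ) ℓ D, (d - Δ) ℓ D + Δ ℓ δ]`, an interval that does not depend on the lemon set.
-/

open Finset

section Bipartite

variable {α β : Type*} [Fintype β] [DecidableEq β] (E : α → Finset β)

def nbrCount (S : Finset α) (j : β) : ℕ := #{u ∈ S | j ∈ E u}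

def uniqueNbrs (S : Finset α) : Finset β := {j | nbrCount E S j = 1}

lemma sum_nbrCount (S : Finset α) : ∑ j, nbrCount E S j = ∑ u ∈ S, #(E u) :=
  calc ∑ j, nbrCount E S j = ∑ j, #(S.bipartiteBelow (fun u j => j ∈ E u) j) := rfl
    _ = ∑ u ∈ S, #(E u) := by
      rw [← sum_card_bipartiteAbove_eq_sum_card_bipartiteBelow]
      simp [bipartiteAbove]

omit [Fintype β] in
lemma nbrCount_le [Fintype α] {r : ℕ} (hright : ∀ j, #{u | j ∈ E u} = r) (S : Finset α)
    (j : β) : nbrCount E S j ≤ r :=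
  hright j ▸ card_le_card (filter_subset_filter _ (subset_univ S))

end Bipartite

lemma card_filter_eq_one_add_sum {β : Type*} [Fintype β] (c : β → ℕ) :
    #{j | c j = 1} + ∑ j ∈ {j | c j ≠ 1}, c j = ∑ j, c j := by
  rw [← sum_filter_add_sum_filter_not univ (c · = 1), card_eq_sum_ones]
  congr 1
  exact sum_congr rfl fun j hj => (mem_filter.1 hj).2.symm

section Tranche

variable {v : ℕ → ℝ} {r : ℕ} {δ : ℝ}

lemma sub_le_mul_of_le (hlip : ∀ g i, g + i ≤ r → v (g + i) - v g ≤ i * δ) {c : ℕ}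
    (hc : c ≤ r) : v r - v (r - c) ≤ c * δ := by
  simpa only [Nat.sub_add_cancel hc] using hlip (r - c) c (by omega)

lemma sub_pred_le (hδ : 0 ≤ δ) (hlip : ∀ g i, g + i ≤ r → v (g + i) - v g ≤ i * δ) :
    v r - v (r - 1) ≤ δ := by
  rcases Nat.eq_zero_or_pos r with rfl | hr
  · simpa using hδ
  · simpa using sub_le_mul_of_le hlip hr

section Counts

variable {β : Type*} [Fintype β]

lemma card_mul_le_sum_sub (hmono : ∀ i j, i ≤ j → j ≤ r → v i ≤ v j) (c : β → ℕ) :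
    #{j | c j = 1} * (v r - v (r - 1)) ≤ ∑ j, (v r - v (r - c j)) := by
  rw [← nsmul_eq_mul, ← sum_const, ← sum_filter_add_sum_filter_not univ (c · = 1)]
  refine le_add_of_le_of_nonneg (sum_le_sum fun j hj => by rw [(mem_filter.1 hj).2]) ?_
  exact sum_nonneg fun j _ => sub_nonneg.2 (hmono _ _ (Nat.sub_le r _) le_rfl)

lemma sum_sub_le (hlip : ∀ g i, g + i ≤ r → v (g + i) - v g ≤ i * δ) (c : β → ℕ)
    (hc : ∀ j, c j ≤ r) :
    ∑ j, (v r - v (r - c j)) ≤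
      #{j | c j = 1} * (v r - v (r - 1)) + (∑ j ∈ {j | c j ≠ 1}, c j : ℕ) * δ := by
  rw [← nsmul_eq_mul, ← sum_const, ← sum_filter_add_sum_filter_not univ (c · = 1),
    Nat.cast_sum, sum_mul]
  refine add_le_add (sum_le_sum fun j hj => by rw [(mem_filter.1 hj).2]) ?_
  exact sum_le_sum fun j _ => sub_le_mul_of_le hlip (hc j)

end Counts

variable {α β : Type*} [Fintype α] [Fintype β] [DecidableEq β] {E : α → Finset β} {d : ℕ}

variable (v r E) in
def valueLoss (S : Finset α) : ℝ := ∑ j, (v r - v (r - nbrCount E S j))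

lemma valueLoss_mem_Icc (hδ : 0 ≤ δ) (hleft : ∀ u, #(E u) = d)
    (hright : ∀ j, #{u | j ∈ E u} = r) (hmono : ∀ i j, i ≤ j → j ≤ r → v i ≤ v j)
    (hlip : ∀ g i, g + i ≤ r → v (g + i) - v g ≤ i * δ) {S : Finset α} {Δ : ℝ}
    (hexp : (d - Δ) * #S ≤ #(uniqueNbrs E S)) :
    valueLoss v r E S ∈ Set.Icc ((d - Δ) * #S * (v r - v (r - 1)))
      ((d - Δ) * #S * (v r - v (r - 1)) + Δ * #S * δ) := by
  have hstep_nonneg : 0 ≤ v r - v (r - 1) := sub_nonneg.2 (hmono _ _ (Nat.sub_le r 1) le_rfl)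
  have hstep_le := sub_pred_le hδ hlip
  have hlow : (#(uniqueNbrs E S) : ℝ) * (v r - v (r - 1)) ≤ valueLoss v r E S :=
    card_mul_le_sum_sub hmono (nbrCount E S)
  have hup : valueLoss v r E S ≤ #(uniqueNbrs E S) * (v r - v (r - 1)) +
      (∑ j ∈ {j | nbrCount E S j ≠ 1}, nbrCount E S j : ℕ) * δ :=
    sum_sub_le hlip (nbrCount E S) (nbrCount_le E hright S)
  have hcount : (#(uniqueNbrs E S) : ℝ) + (∑ j ∈ {j | nbrCount E S j ≠ 1}, nbrCount E S j : ℕ)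
      = #S * d := by
    rw [← Nat.cast_mul, ← sum_const_nat fun u _ => hleft u, ← sum_nbrCount,
      ← card_filter_eq_one_add_sum]
    push_cast
    rfl
  constructor
  · exact (mul_le_mul_of_nonneg_right hexp hstep_nonneg).trans hlow
  · nlinarith [mul_nonneg (sub_nonneg.2 hexp) (sub_nonneg.2 hstep_le)]

end Tranche

theorem stmt11_general (n m d r Δ ℓ : ℕ) (δ : ℝ) (hδ : 0 ≤ δ)
    (E : Fin n → Finset (Fin m))
    (hleft : ∀ u, (E u).card = d)
    (hright : ∀ v : Fin m, (Finset.univ.filter (fun u => v ∈ E u)).card = r)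
    (hexp : ∀ S : Finset (Fin n), S.card ≤ ℓ →
      ((d : ℝ) - Δ) * S.card ≤
        ((Finset.univ.filter
          (fun v : Fin m => (S.filter (fun u => v ∈ E u)).card = 1)).card : ℝ))
    (v : ℕ → ℝ) (hmono : ∀ i j, i ≤ j → j ≤ r → v i ≤ v j)
    (hlip : ∀ g i, g + i ≤ r → v (g + i) - v g ≤ i * δ)
    (L L' : Finset (Fin n)) (hL : L.card = ℓ) (hL' : L'.card = ℓ) :
    |(∑ j : Fin m, v (r - (L'.filter (fun u => j ∈ E u)).card)) -
      (∑ j : Fin m, v (r - (L.filter (fun u => j ∈ E u)).card))| ≤ 2 * Δ * ℓ * δ := by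
  have hloss (S : Finset (Fin n)) (hS : #S = ℓ) := hS ▸
    valueLoss_mem_Icc hδ hleft hright hmono hlip (hexp S hS.le)
  have hΔℓδ : 0 ≤ (Δ : ℝ) * ℓ * δ := by positivity
  change |∑ j, v (r - nbrCount E L' j) - ∑ j, v (r - nbrCount E L j)| ≤ _
  calc _ = |valueLoss v r E L - valueLoss v r E L'| := by
        simp only [valueLoss, sum_sub_distrib]; ring_nf
    _ ≤ Δ * ℓ * δ := by
        simpa using abs_sub_le_of_le_of_le (hloss L hL).1 (hloss L hL).2
          (hloss L' hL').1 (hloss L' hL').2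
    _ ≤ 2 * Δ * ℓ * δ := by linarith

/-- Abstract form of Theorem `unique-cdo` for a single tranche: for a `(d,r)`-biregular
`(ℓ, d−Δ)`-unique-neighbor expander and a nondecreasing tranche-value function `v` with
increments `v(g+i) − v(g) ≤ iδ`, the total tranche value changes by at most `2Δℓδ`
under any relocation of the `ℓ` lemons. -/
theorem stmt11 (n m d r Δ ℓ : ℕ) (δ : ℝ) (hδ : 0 ≤ δ)
    (hbal : n * d = m * r)
    (E : Fin n → Finset (Fin m))
    (hleft : ∀ u, (E u).card = d)
    (hright : ∀ v : Fin m, (Finset.univ.filter (fun u => v ∈ E u)).card = r)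
    (hexp : ∀ S : Finset (Fin n), S.card ≤ ℓ →
      ((d : ℝ) - Δ) * S.card ≤
        ((Finset.univ.filter
          (fun v : Fin m => (S.filter (fun u => v ∈ E u)).card = 1)).card : ℝ))
    (v : ℕ → ℝ) (hmono : ∀ i j, i ≤ j → j ≤ r → v i ≤ v j)
    (hlip : ∀ g i, g + i ≤ r → v (g + i) - v g ≤ i * δ)
    (L L' : Finset (Fin n)) (hL : L.card = ℓ) (hL' : L'.card = ℓ) :
    |(∑ j : Fin m, v (r - (L'.filter (fun u => j ∈ E u)).card)) -
      (∑ j : Fin m, v (r - (L.filter (fun u => j ∈ E u)).card))| ≤ 2 * Δ * ℓ * δ :=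
  stmt11_general n m d r Δ ℓ δ hδ E hleft hright hexp v hmono hlip L L' hL hL'
end

section
/- Let G₀ be a d₀-left-regular bipartite graph on [n] ∪ [m₀], and let m, d, r be positive integers with nd = mr, d₀ < d ≤ m₀, and m ≥ m₀d/(d−d₀). Then the right vertices of G₀ can be split (each right vertex v of degree r_v > r replaced by ⌈r_v/r⌉ vertices among which the edges of v are partitioned, with ⌊r_v/r⌋ of them receiving exactly r edges), isolated right vertices added, and edges added, so as to obtain a simple (d,r)-biregular bipartite graph on [n] ∪ [m]; moreover this construction preserves any (k_max, γ)-expansion property of left subsets (i.e., if every S ⊆ [n] with |S| ≤ k_max has |Γ(S)| ≥ γ|S| in G₀, the same holds in the new graph). -/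
/-!
Split every right vertex `w` of `G₀` into `⌈deg w / r⌉` new vertices and share its edges among
them, at most `r` per new vertex; `m₀ d ≤ m (d - d₀)` makes room for all of them. Every new vertex
remembers the vertex it came from, so the neighbourhood of a left set cannot shrink.

It remains to add `d - d₀` new edges at every left vertex so that every right vertex reaches
degree `r`. This is a degree-constrained subgraph problem, solved by a Hall-type theorem: if every
set `T` of right vertices demands at most `∑ᵤ min (κ u, |T ∩ N u|)` edges, all demands can be met.
The proof routes one unit of demand at a time; a suitable edge exists because tight sets are
closed under union, the right-hand side being submodular in `T`.
-/

open Finset Function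

namespace Bipartite

lemma sum_card_inter_eq_sum_card_filter {α β : Type*} [Fintype α] [DecidableEq β]
    (H : α → Finset β) (T : Finset β) :
    ∑ u, #(T ∩ H u) = ∑ v ∈ T, #{u | v ∈ H u} := by
  simpa [bipartiteAbove, bipartiteBelow, filter_mem_eq_inter] using
    sum_card_bipartiteAbove_eq_sum_card_bipartiteBelow (s := univ) (t := T) (fun u v => v ∈ H u)

lemma exists_card_fiber_ge {β γ : Type*} [Fintype β] [Fintype γ] [DecidableEq β] [Nonempty β]
    (q : β → ℕ) (hq : ∑ b, q b ≤ Fintype.card γ) :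
    ∃ π : γ → β, ∀ b, q b ≤ #{c | π c = b} := by
  obtain ⟨e⟩ : Nonempty ((Σ b, Fin (q b)) ↪ γ) :=
    Function.Embedding.nonempty_of_card_le (by simpa using hq)
  refine ⟨extend e Sigma.fst fun _ => Classical.arbitrary β, fun b => ?_⟩
  have hinj : Injective fun i : Fin (q b) => e ⟨b, i⟩ := fun i j h => by simpa using e.injective h
  calc q b = #(univ.map ⟨_, hinj⟩) := by simp
    _ ≤ _ := card_le_card fun c hc => by
        obtain ⟨i, -, rfl⟩ := mem_map.1 hc
        simp [e.injective.extend_apply]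

lemma exists_mapsTo_card_fiber_le {α γ : Type*} [DecidableEq γ] [Nonempty γ] {s : Finset α}
    {t : Finset γ} {r : ℕ} (h : #s ≤ r * #t) :
    ∃ f : α → γ, Set.MapsTo f s t ∧ ∀ c, #{a ∈ s | f a = c} ≤ r := by
  obtain ⟨e⟩ : Nonempty (s ↪ t × Fin r) :=
    Function.Embedding.nonempty_of_card_le (by simpa [mul_comm] using h)
  classical
  let f a := if h : a ∈ s then ((e ⟨a, h⟩).1 : γ) else Classical.arbitrary γ
  let g a := if h : a ∈ s then ((e ⟨a, h⟩).2 : ℕ) else 0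
  refine ⟨f, fun a ha => by simp [f, mem_coe.1 ha], fun c => ?_⟩
  calc #{a ∈ s | f a = c} ≤ #(range r) := by
        refine card_le_card_of_injOn g (fun a ha => ?_) fun a ha a' ha' hg => ?_
        · simp [g, (mem_filter.1 ha).1]
        · simp only [coe_filter, Set.mem_ofPred_eq] at ha ha'
          have hf : f a = f a' := ha.2.trans ha'.2.symm
          simp only [f, g, ha.1, ha'.1, dite_true] at hf hg
          exact congrArg Subtype.val (e.injective (Prod.ext (Subtype.ext hf) (Fin.ext hg)))
    _ = r := card_range r

theorem exists_split {α β γ : Type*} [Fintype α] [Fintype β] [Fintype γ] [DecidableEq β]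
    [DecidableEq γ] [Nonempty β] [Nonempty γ] (E₀ : α → Finset β) {r : ℕ} (hr : 0 < r)
    (hcard : ∑ b, #{a | b ∈ E₀ a} ⌈/⌉ r ≤ Fintype.card γ) :
    ∃ H : α → Finset γ, (∀ a, #(H a) = #(E₀ a)) ∧ (∀ c, #{a | c ∈ H a} ≤ r) ∧
      ∀ S : Finset α, #(S.biUnion E₀) ≤ #(S.biUnion H) := by
  obtain ⟨π, hπ⟩ := exists_card_fiber_ge _ hcard
  choose f hf_maps hf_fiber using fun b => exists_mapsTo_card_fiber_le
    (s := {a | b ∈ E₀ a}) (t := {c | π c = b})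
    (((ceilDiv_le_iff_le_mul hr).1 le_rfl).trans (Nat.mul_le_mul_left r (hπ b)))
  have hπf : ∀ a, ∀ b ∈ E₀ a, π (f b a) = b := fun a b hb => by
    simpa using hf_maps b (by simpa using hb)
  refine ⟨fun a => (E₀ a).image fun b => f b a,
    fun a => card_image_of_injOn fun b hb b' hb' h => ?_, fun c => ?_, fun S => ?_⟩
  · rw [← hπf a b hb, ← hπf a b' hb']
    exact congrArg π h
  · refine (card_le_card fun a ha => ?_).trans (hf_fiber (π c) c)
    simp only [mem_filter, mem_univ, true_and, mem_image] at ha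
    obtain ⟨b, hb, rfl⟩ := ha
    simp [hπf a b hb, hb]
  · calc #(S.biUnion E₀) = #((S.biUnion fun a => (E₀ a).image fun b => f b a).image π) := by
          rw [biUnion_image]
          congr 1
          refine biUnion_congr rfl fun a _ => ?_
          rw [image_image]
          exact ((image_congr (hπf a)).trans image_id').symm
      _ ≤ _ := card_image_le

lemma mul_sum_ceilDiv_card_filter_le {α β : Type*} [Fintype α] [Fintype β] [DecidableEq β]
    (E₀ : α → Finset β) {d₀ : ℕ} (hreg : ∀ a, #(E₀ a) = d₀) (r : ℕ) :
    r * ∑ b, #{a | b ∈ E₀ a} ⌈/⌉ r ≤ Fintype.card α * d₀ + Fintype.card β * (r - 1) := by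
  have h := sum_card_inter_eq_sum_card_filter E₀ univ
  simp only [univ_inter, hreg, sum_const, card_univ, smul_eq_mul] at h
  calc r * ∑ b, #{a | b ∈ E₀ a} ⌈/⌉ r = ∑ b, r * (#{a | b ∈ E₀ a} ⌈/⌉ r) := mul_sum _ _ _
    _ ≤ ∑ b, (#{a | b ∈ E₀ a} + (r - 1)) := sum_le_sum fun b _ => by
        rw [Nat.ceilDiv_eq_add_pred_div]
        exact (Nat.mul_div_le _ _).trans (by omega)
    _ = _ := by rw [sum_add_distrib, ← h, sum_const, card_univ, smul_eq_mul]

section Completion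

variable {α β : Type*} [Fintype α] [DecidableEq β]

-- bounds the number of edges that a subgraph of `N` with left degrees at most `κ` sends into `T`
def capacity (N : α → Finset β) (κ : α → ℕ) (T : Finset β) : ℕ :=
  ∑ u, min (κ u) #(T ∩ N u)

def HallCondition (N : α → Finset β) (κ : α → ℕ) (δ : β → ℕ) : Prop :=
  ∀ T : Finset β, ∑ v ∈ T, δ v ≤ capacity N κ T

variable {N : α → Finset β} {κ : α → ℕ} {δ : β → ℕ}

lemma capacity_union_add_capacity_inter_le (N : α → Finset β) (κ : α → ℕ) (T₁ T₂ : Finset β) :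
    capacity N κ (T₁ ∪ T₂) + capacity N κ (T₁ ∩ T₂) ≤ capacity N κ T₁ + capacity N κ T₂ := by
  simp only [capacity, ← sum_add_distrib]
  refine sum_le_sum fun u _ => ?_
  rw [union_inter_distrib_right, inter_inter_distrib_right]
  have := card_union_add_card_inter (T₁ ∩ N u) (T₂ ∩ N u)
  have := card_le_card (subset_union_left (s₁ := T₁ ∩ N u) (s₂ := T₂ ∩ N u))
  have := card_le_card (subset_union_right (s₁ := T₁ ∩ N u) (s₂ := T₂ ∩ N u))
  omega

lemma HallCondition.exists_greatest_tight [Fintype β] (hall : HallCondition N κ δ)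
    (U : Finset β) :
    ∃ T₀ ⊆ U, ∑ v ∈ T₀, δ v = capacity N κ T₀ ∧
      ∀ T ⊆ U, ∑ v ∈ T, δ v = capacity N κ T → T ⊆ T₀ := by
  set tight := {T ∈ U.powerset | ∑ v ∈ T, δ v = capacity N κ T}
  refine ⟨tight.sup id, Finset.sup_le fun T hT => mem_powerset.1 (mem_filter.1 hT).1, ?_,
    fun T hTU hT => le_sup (f := id) (mem_filter.2 ⟨mem_powerset.2 hTU, hT⟩)⟩
  refine sup_induction (p := fun T => ∑ v ∈ T, δ v = capacity N κ T) (by simp [capacity]) ?_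
    fun T hT => (mem_filter.1 hT).2
  -- tight sets are closed under union, by submodularity of `capacity`
  intro T₁ h₁ T₂ h₂
  have := sum_union_inter (s₁ := T₁) (s₂ := T₂) (f := δ)
  have := capacity_union_add_capacity_inter_le N κ T₁ T₂
  have := hall (T₁ ∪ T₂)
  have := hall (T₁ ∩ T₂)
  simp only [sup_eq_union]
  omega

lemma capacity_update_add [DecidableEq α] (N : α → Finset β) (κ : α → ℕ) (u₀ : α)
    (X : Finset β) (k : ℕ) (T : Finset β) :
    capacity (update N u₀ X) (update κ u₀ k) T + min (κ u₀) #(T ∩ N u₀) =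
      capacity N κ T + min k #(T ∩ X) := by
  simp only [capacity]
  rw [← add_sum_erase _ _ (mem_univ u₀), ← add_sum_erase univ _ (mem_univ u₀),
    sum_congr rfl fun u hu => by rw [update_of_ne (ne_of_mem_erase hu),
      update_of_ne (ne_of_mem_erase hu)]]
  simp only [update_self]
  ring

lemma capacity_insert_of_saturated {v₀ : β} {T : Finset β}
    (hsat : ∀ u, v₀ ∈ N u → 0 < κ u → κ u ≤ #(T ∩ N u)) :
    capacity N κ (insert v₀ T) = capacity N κ T := by
  refine sum_congr rfl fun u _ => ?_
  by_cases hN : v₀ ∈ N u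
  · rw [insert_inter_of_mem hN]
    have := card_insert_le v₀ (T ∩ N u)
    have := card_le_card (subset_insert v₀ (T ∩ N u))
    rcases Nat.eq_zero_or_pos (κ u) with h0 | hpos
    · simp [h0]
    · have := hsat u hN hpos
      omega
  · rw [insert_inter_of_notMem hN]

lemma sum_update_pred_add_ite (δ : β → ℕ) {v₀ : β} (hv₀ : 0 < δ v₀) (T : Finset β) :
    ∑ v ∈ T, update δ v₀ (δ v₀ - 1) v + (if v₀ ∈ T then 1 else 0) = ∑ v ∈ T, δ v := by
  split_ifs with h
  · rw [sum_update_of_mem h, sum_eq_add_sum_sdiff_singleton_of_mem h]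
    omega
  · rw [sum_update_of_notMem h, add_zero]

/-- Routing one unit of the demand at `v₀` along a suitable edge `u₀ v₀` keeps Hall's condition. -/
lemma HallCondition.exists_update [DecidableEq α] [Fintype β] (hall : HallCondition N κ δ)
    {v₀ : β} (hv₀ : 0 < δ v₀) :
    ∃ u₀, v₀ ∈ N u₀ ∧ 0 < κ u₀ ∧
      HallCondition (update N u₀ ((N u₀).erase v₀)) (update κ u₀ (κ u₀ - 1))
        (update δ v₀ (δ v₀ - 1)) := by
  obtain ⟨T₀, hT₀, tight₀, greatest₀⟩ := hall.exists_greatest_tight (univ.erase v₀)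
  have hv₀T₀ : v₀ ∉ T₀ := fun h => notMem_erase v₀ univ (hT₀ h)
  by_contra! hbad
  suffices hsat : ∀ u, v₀ ∈ N u → 0 < κ u → κ u ≤ #(T₀ ∩ N u) by
    have := hall (insert v₀ T₀)
    rw [sum_insert hv₀T₀, capacity_insert_of_saturated hsat] at this
    omega
  intro u₀ hN hκ
  obtain ⟨T, hT⟩ : ∃ T, capacity (update N u₀ ((N u₀).erase v₀)) (update κ u₀ (κ u₀ - 1)) T <
      ∑ v ∈ T, update δ v₀ (δ v₀ - 1) v := by simpa [HallCondition] using hbad u₀ hN hκ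
  have hcap := capacity_update_add N κ u₀ ((N u₀).erase v₀) (κ u₀ - 1) T
  have hsum := sum_update_pred_add_ite δ hv₀ T
  have hallT := hall T
  rw [inter_erase] at hcap
  by_cases hv₀T : v₀ ∈ T
  · have := card_erase_of_mem (mem_inter.2 ⟨hv₀T, hN⟩)
    have := card_pos.2 ⟨v₀, mem_inter.2 ⟨hv₀T, hN⟩⟩
    simp only [hv₀T, if_true] at hsum
    omega
  · -- `T` is tight and saturates `u₀`, so the greatest tight set avoiding `v₀` does too
    rw [erase_eq_of_notMem (fun h => hv₀T (mem_inter.1 h).1)] at hcap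
    simp only [hv₀T, if_false, add_zero] at hsum
    have hsub : T ⊆ T₀ :=
      greatest₀ T (fun v hv => mem_erase.2 ⟨ne_of_mem_of_not_mem hv hv₀T, mem_univ v⟩) (by omega)
    have := card_le_card (inter_subset_inter hsub (subset_refl (N u₀)))
    omega

theorem HallCondition.exists_subgraph [DecidableEq α] [Fintype β] (hall : HallCondition N κ δ) :
    ∃ A : α → Finset β, (∀ u, A u ⊆ N u) ∧ (∀ u, #(A u) ≤ κ u) ∧
      ∀ v, #{u | v ∈ A u} = δ v := by
  induction hs : ∑ v, δ v generalizing N κ δ with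
  | zero =>
    refine ⟨fun _ => ∅, fun _ => empty_subset _, fun _ => by simp, fun v => ?_⟩
    simp [(sum_eq_zero_iff.1 hs) v (mem_univ v)]
  | succ s ih =>
    obtain ⟨v₀, hv₀⟩ : ∃ v₀, 0 < δ v₀ := by
      by_contra! h
      simp_all
    obtain ⟨u₀, hN, hκ, hall'⟩ := hall.exists_update hv₀
    have := sum_update_pred_add_ite δ hv₀ univ
    obtain ⟨A, hAN, hAκ, hAδ⟩ := ih hall' (by simp only [mem_univ, if_true] at this; omega)
    have hv₀A : v₀ ∉ A u₀ := fun h => by simpa using hAN u₀ h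
    refine ⟨update A u₀ (insert v₀ (A u₀)), fun u => ?_, fun u => ?_, fun v => ?_⟩
    · rcases eq_or_ne u u₀ with rfl | hu
      · simpa [insert_subset_iff, hN] using (hAN u).trans (by simp [erase_subset])
      · simpa [hu] using hAN u
    · rcases eq_or_ne u u₀ with rfl | hu
      · have := hAκ u
        simp only [update_self, card_insert_of_notMem hv₀A] at this ⊢
        omega
      · simpa [hu] using hAκ u
    · have := hAδ v
      rcases eq_or_ne v v₀ with rfl | hv
      · have hfilter : #{u | v ∈ update A u₀ (insert v (A u₀)) u} =
            #(insert u₀ ({u | v ∈ A u} : Finset α)) := by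
          congr 1
          ext u
          rcases eq_or_ne u u₀ with rfl | hu <;> simp [*]
        rw [hfilter, card_insert_of_notMem (by simpa using hv₀A)]
        simp only [update_self] at this
        omega
      · rw [update_of_ne hv] at this
        rw [← this]
        congr 1
        ext u
        rcases eq_or_ne u u₀ with rfl | hu <;> simp [*]

lemma hallCondition_compl [Fintype β] {H : α → Finset β} {d₀ K r : ℕ} (hH : ∀ u, #(H u) ≤ d₀)
    (hdeg : ∀ v, #{u | v ∈ H u} ≤ r)
    (hsum : ∑ v, (r - #{u | v ∈ H u}) ≤ Fintype.card α * K)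
    (hrd : r * (K + d₀) ≤ Fintype.card α * K) :
    HallCondition (fun u => (H u)ᶜ) (fun _ => K) (fun v => r - #{u | v ∈ H u}) := by
  intro T
  have hsplit : ∀ u, #(T ∩ (H u)ᶜ) + #(T ∩ H u) = #T := fun u => by
    rw [← sdiff_eq_inter_compl, card_sdiff_add_card_inter]
  have hx : ∀ u, #(T ∩ H u) ≤ d₀ := fun u => (card_le_card inter_subset_right).trans (hH u)
  have hLX : ∑ v ∈ T, (r - #{u | v ∈ H u}) + ∑ u, #(T ∩ H u) = r * #T := by
    rw [sum_card_inter_eq_sum_card_filter, ← sum_add_distrib,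
      sum_congr rfl fun v _ => Nat.sub_add_cancel (hdeg v), sum_const, smul_eq_mul, mul_comm]
  show ∑ v ∈ T, (r - #{u | v ∈ H u}) ≤ ∑ u, min K #(T ∩ (H u)ᶜ)
  rcases le_or_gt #T K with hsmall | hTK
  · have hrn : r * #T ≤ Fintype.card α * #T := by
      rcases Nat.eq_zero_or_pos #T with h0 | hpos
      · simp [h0]
      · exact Nat.mul_le_mul_right _
          (Nat.le_of_mul_le_mul_right (by nlinarith) (hpos.trans_le hsmall))
    have : ∑ u, min K #(T ∩ (H u)ᶜ) + ∑ u, #(T ∩ H u) = Fintype.card α * #T := by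
      rw [← sum_add_distrib,
        sum_congr rfl fun u _ => by rw [min_eq_right (by linarith [hsplit u]), hsplit u],
        sum_const, card_univ, smul_eq_mul]
    omega
  rcases le_or_gt (K + d₀) #T with hlarge | hmid
  · rw [sum_congr rfl fun u _ => min_eq_left (by linarith [hsplit u, hx u]), sum_const, card_univ,
      smul_eq_mul]
    exact (sum_le_sum_of_subset (subset_univ T)).trans hsum
  · -- average the pointwise bound `d₀ K + b x ≤ d₀ min(K, t - x) + d₀ x`, where `t = K + b`
    obtain ⟨b, hb⟩ : ∃ b, #T = K + b := ⟨#T - K, by omega⟩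
    have hpt : ∀ u, d₀ * K + b * #(T ∩ H u) ≤ d₀ * min K #(T ∩ (H u)ᶜ) + d₀ * #(T ∩ H u) :=
      fun u => by
        have := hsplit u
        have := hx u
        rcases le_total K #(T ∩ (H u)ᶜ) with h | h
        · rw [min_eq_left h]
          nlinarith
        · rw [min_eq_right h]
          nlinarith
    have hsum_pt := sum_le_sum fun u (_ : u ∈ univ) => hpt u
    rw [sum_add_distrib, sum_add_distrib, sum_const, card_univ, smul_eq_mul, ← mul_sum, ← mul_sum,
      ← mul_sum] at hsum_pt
    have := Nat.mul_le_mul_left d₀ ((Nat.mul_le_mul_left r hmid.le).trans hrd)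
    have := congrArg (d₀ * ·) hLX
    refine Nat.le_of_mul_le_mul_left ?_ (show 0 < d₀ by omega)
    simp only [mul_add] at this
    nlinarith [Nat.zero_le (b * ∑ u, #(T ∩ H u))]

theorem exists_biregular_supergraph [DecidableEq α] [Fintype β] (H : α → Finset β) {d₀ d r : ℕ}
    (hH : ∀ u, #(H u) = d₀) (hdeg : ∀ v, #{u | v ∈ H u} ≤ r)
    (hbal : Fintype.card α * d = Fintype.card β * r) (hd₀ : d₀ ≤ d)
    (hrd : r * d ≤ Fintype.card α * (d - d₀)) :
    ∃ E : α → Finset β, (∀ u, H u ⊆ E u) ∧ (∀ u, #(E u) = d) ∧ ∀ v, #{u | v ∈ E u} = r := by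
  have hdemand : ∑ v, (r - #{u | v ∈ H u}) = Fintype.card α * (d - d₀) := by
    have h := sum_card_inter_eq_sum_card_filter H univ
    simp only [univ_inter, hH, sum_const, card_univ, smul_eq_mul] at h
    have : ∑ v, (r - #{u | v ∈ H u}) + ∑ v, #{u | v ∈ H u} = Fintype.card β * r := by
      rw [← sum_add_distrib, sum_congr rfl fun v _ => Nat.sub_add_cancel (hdeg v), sum_const,
        card_univ, smul_eq_mul]
    rw [Nat.mul_sub]
    have := Nat.mul_le_mul_left (Fintype.card α) hd₀
    omega
  obtain ⟨A, hAH, hAκ, hAδ⟩ := (hallCondition_compl (fun u => (hH u).le) hdeg hdemand.le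
    (by rwa [Nat.sub_add_cancel hd₀])).exists_subgraph
  have hAcard : ∀ u, #(A u) = d - d₀ := by
    have := sum_card_inter_eq_sum_card_filter A univ
    simp only [univ_inter, hAδ, hdemand] at this
    refine fun u => (sum_eq_sum_iff_of_le fun u _ => hAκ u).1 ?_ u (mem_univ u)
    rw [this, sum_const, card_univ, smul_eq_mul]
  have hdisj : ∀ u, Disjoint (H u) (A u) := fun u =>
    disjoint_of_subset_right (hAH u) disjoint_compl_right
  refine ⟨fun u => H u ∪ A u, fun u => subset_union_left, fun u => ?_, fun v => ?_⟩
  · rw [card_union_of_disjoint (hdisj u), hH, hAcard]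
    omega
  · simp only [mem_union]
    rw [filter_or, card_union_of_disjoint
      (disjoint_filter.2 fun u _ hH hA => disjoint_left.1 (hdisj u) hH hA), hAδ]
    exact Nat.add_sub_cancel' (hdeg v)

end Completion

end Bipartite

open Bipartite

theorem stmt14_general (n m₀ m d₀ d r kmax : ℕ) (γ : ℝ)
    (hm : 0 < m) (hd : 0 < d) (hr : 0 < r)
    (hbal : n * d = m * r) (h1 : d₀ < d) (h2 : d ≤ m₀)
    (h3 : m₀ * d ≤ m * (d - d₀))
    (E₀ : Fin n → Finset (Fin m₀)) (hreg : ∀ u, (E₀ u).card = d₀)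
    (hexp : ∀ S : Finset (Fin n), S.card ≤ kmax →
      γ * S.card ≤ ((S.biUnion E₀).card : ℝ)) :
    ∃ E : Fin n → Finset (Fin m),
      (∀ u, (E u).card = d) ∧
      (∀ v : Fin m, (Finset.univ.filter (fun u => v ∈ E u)).card = r) ∧
      (∀ S : Finset (Fin n), S.card ≤ kmax →
        γ * S.card ≤ ((S.biUnion E).card : ℝ)) := by
  have : Nonempty (Fin m₀) := ⟨⟨0, by omega⟩⟩
  have : Nonempty (Fin m) := ⟨⟨0, hm⟩⟩
  have hsplit : ∑ w, #{u | w ∈ E₀ u} ⌈/⌉ r ≤ m := by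
    have hS := mul_sum_ceilDiv_card_filter_le E₀ hreg r
    simp only [Fintype.card_fin] at hS
    obtain ⟨K, rfl⟩ : ∃ K, d = d₀ + K := ⟨d - d₀, by omega⟩
    obtain ⟨s, rfl⟩ : ∃ s, r = s + 1 := ⟨r - 1, by omega⟩
    simp only [Nat.add_sub_cancel_left, Nat.add_sub_cancel] at h3 hS
    refine le_of_mul_le_mul_left (a := (d₀ + K) * (s + 1)) ?_ (by positivity)
    nlinarith
  have hrd : r * d ≤ n * (d - d₀) := by
    refine le_of_mul_le_mul_left (a := d) ?_ hd
    calc d * (r * d) = r * (d * d) := by ring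
      _ ≤ r * (m₀ * d) := Nat.mul_le_mul_left r (Nat.mul_le_mul_right d h2)
      _ ≤ r * (m * (d - d₀)) := Nat.mul_le_mul_left r h3
      _ = d * (n * (d - d₀)) := by rw [← mul_assoc, mul_comm r m, ← hbal]; ring
  obtain ⟨H, hHcard, hHdeg, hHexp⟩ := exists_split (γ := Fin m) E₀ hr (by simpa using hsplit)
  obtain ⟨E, hHE, hEcard, hEdeg⟩ := exists_biregular_supergraph H
    (fun u => (hHcard u).trans (hreg u)) hHdeg (by simpa using hbal) h1.le (by simpa using hrd)
  refine ⟨E, hEcard, hEdeg, fun S hS => (hexp S hS).trans ?_⟩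
  exact_mod_cast (hHexp S).trans (card_le_card (biUnion_mono fun u _ => hHE u))

/-- Conversion of a `d₀`-left-regular expander on `[n] ∪ [m₀]` into a `(d,r)`-biregular
graph on `[n] ∪ [m]` (with `nd = mr`, `d₀ < d ≤ m₀` and `m ≥ m₀d/(d−d₀)`) preserving
any `(kmax, γ)`-expansion property of left subsets. -/
theorem stmt14 (n m₀ m d₀ d r kmax : ℕ) (γ : ℝ)
    (hn : 0 < n) (hm : 0 < m) (hd : 0 < d) (hr : 0 < r)
    (hbal : n * d = m * r) (h1 : d₀ < d) (h2 : d ≤ m₀)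
    (h3 : m₀ * d ≤ m * (d - d₀))
    (E₀ : Fin n → Finset (Fin m₀)) (hreg : ∀ u, (E₀ u).card = d₀)
    (hexp : ∀ S : Finset (Fin n), S.card ≤ kmax →
      γ * S.card ≤ ((S.biUnion E₀).card : ℝ)) :
    ∃ E : Fin n → Finset (Fin m),
      (∀ u, (E u).card = d) ∧
      (∀ v : Fin m, (Finset.univ.filter (fun u => v ∈ E u)).card = r) ∧
      (∀ S : Finset (Fin n), S.card ≤ kmax →
        γ * S.card ≤ ((S.biUnion E).card : ℝ)) :=
  stmt14_general n m₀ m d₀ d r kmax γ hm hd hr hbal h1 h2 h3 E₀ hreg hexp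
end

section
/- Let d ≥ 2 be an integer and q the smallest power of 2 with q ≥ d. Suppose for every positive integer h, prime power q, and powers n', m' of q there exists a bipartite graph on [n'] ∪ [m'] with left degree q that is a (k, q−Δ)-expander with k = h^{log_q m' − 1} and Δ = (h−1)(log_q n' − 1)(log_q m' − 1). Then for any α ∈ (0,1] and positive integers n, m ≥ q there exists a bipartite graph on [n] ∪ [m] with left degree d that is a (k_max, d − Δ)-expander with k_max = (m/(4d²))^α and Δ = (2d)^α (log_d n)(log_d m). -/
/-!
Round `d` up to the power of two `q < 2d` and apply the Guruswami–Umans–Vadhan construction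
with `h = ⌈q^α⌉`, `n' = q^⌈log_q n⌉ ≥ n` and `m' = q^⌊log_q m⌋ ≤ m`. Restricting to `n` left
vertices keeps the expansion, embedding `[m']` into `[m]` keeps neighbourhood sizes, and keeping
only `d` of the `q` neighbours of each vertex costs at most `q - d` per vertex. What remains is
arithmetic: `(m / (4d²))^α ≤ (m / q²)^α ≤ (q^α)^(⌊log_q m⌋ - 1) ≤ h^(⌊log_q m⌋ - 1)`, and
`(h - 1)(⌈log_q n⌉ - 1)(⌊log_q m⌋ - 1) ≤ (2d)^α log_d n log_d m`.
-/

open Finset Function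

/-- A bipartite graph is encoded by the neighbourhood `E u` of each left vertex `u`. -/
def IsExpander {α β : Type*} [DecidableEq β] (E : α → Finset β) (k γ : ℝ) : Prop :=
  ∀ S : Finset α, (#S : ℝ) ≤ k → γ * #S ≤ #(S.biUnion E)

namespace IsExpander

variable {α α' β β' : Type*} [DecidableEq β] [DecidableEq β'] {E : α → Finset β} {k γ : ℝ}

theorem mono (hE : IsExpander E k γ) {k' γ' : ℝ} (hk : k' ≤ k) (hγ : γ' ≤ γ) :
    IsExpander E k' γ' := fun S hS =>
  (mul_le_mul_of_nonneg_right hγ (Nat.cast_nonneg _)).trans (hE S (hS.trans hk))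

theorem comp_injective (hE : IsExpander E k γ) {f : α' → α} (hf : Injective f) :
    IsExpander (E ∘ f) k γ := by
  classical
  intro S hS
  have h := hE (S.map ⟨f, hf⟩) (by rwa [card_map])
  rwa [card_map, map_eq_image, image_biUnion] at h

theorem image_injective (hE : IsExpander E k γ) {g : β → β'} (hg : Injective g) :
    IsExpander (fun u => (E u).image g) k γ := by
  intro S hS
  rw [← biUnion_image, card_image_of_injective _ hg]
  exact hE S hS

theorem of_card_sdiff_le (hE : IsExpander E k γ) {F : α → Finset β} {r : ℕ}
    (hr : ∀ u, #(E u \ F u) ≤ r) : IsExpander F k (γ - r) := by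
  intro S hS
  have hsplit : S.biUnion E ⊆ S.biUnion F ∪ S.biUnion fun u => E u \ F u := by
    intro x hx
    simp only [mem_biUnion, mem_union, mem_sdiff] at hx ⊢
    obtain ⟨u, hu, hxu⟩ := hx
    by_cases hxF : x ∈ F u
    · exact Or.inl ⟨u, hu, hxF⟩
    · exact Or.inr ⟨u, hu, hxu, hxF⟩
  have hdeleted : #(S.biUnion fun u => E u \ F u) ≤ #S * r :=
    card_biUnion_le.trans (by simpa using sum_le_sum fun u _ => hr u)
  have hcard : #(S.biUnion E) ≤ #(S.biUnion F) + #S * r :=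
    (card_le_card hsplit).trans ((card_union_le _ _).trans (by omega))
  have hcardR : (#(S.biUnion E) : ℝ) ≤ #(S.biUnion F) + #S * r := by exact_mod_cast hcard
  linarith [hE S hS]

end IsExpander

theorem lt_two_mul_of_isLeast_two_pow {d q : ℕ} (hd : 1 ≤ d)
    (hq : IsLeast {p : ℕ | (∃ k : ℕ, p = 2 ^ k) ∧ d ≤ p} q) : q < 2 * d := by
  obtain ⟨⟨⟨k, rfl⟩, -⟩, hmin⟩ := hq
  rcases k with _ | k
  · omega
  · by_contra! h
    have := hmin ⟨⟨k, rfl⟩, by rw [pow_succ] at h; omega⟩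
    rw [pow_succ] at this
    have : 0 < 2 ^ k := by positivity
    omega

theorem Real.logb_le_logb_of_base_le {b c x : ℝ} (hb : 1 < b) (hbc : b ≤ c) (hx : 1 ≤ x) :
    Real.logb c x ≤ Real.logb b x :=
  div_le_div_of_nonneg_left (Real.log_nonneg hx) (Real.log_pos hb)
    (Real.log_le_log (by linarith) hbc)

theorem Nat.clog_sub_one_le_logb {b : ℕ} (hb : 1 < b) (n : ℕ) :
    (Nat.clog b n : ℝ) - 1 ≤ Real.logb b n := by
  rcases le_or_gt n 1 with hn | hn
  · rw [Nat.clog_of_right_le_one hn]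
    interval_cases n <;> simp
  · have hlog : Nat.clog b n - 1 ≤ Nat.log b n :=
      Nat.le_log_of_pow_le hb (Nat.pow_pred_clog_lt_self hb hn).le
    have hpos : 1 ≤ Nat.clog b n := Nat.clog_pos hb hn
    calc (Nat.clog b n : ℝ) - 1 = ((Nat.clog b n - 1 : ℕ) : ℝ) := by push_cast [hpos]; ring
      _ ≤ Nat.log b n := by exact_mod_cast hlog
      _ ≤ Real.logb b n := Real.natLog_le_logb n b

theorem Nat.cast_div_sq_le_pow_log_sub_one {q : ℕ} (hq : 1 < q) (m : ℕ) :
    (m : ℝ) / q ^ 2 ≤ (q : ℝ) ^ (Nat.log q m - 1) := by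
  have hlt : (m : ℝ) < (q : ℝ) ^ (Nat.log q m + 1) := by
    exact_mod_cast Nat.lt_pow_succ_log_self hq m
  have hle : (q : ℝ) ^ (Nat.log q m + 1) ≤ (q : ℝ) ^ (Nat.log q m - 1) * q ^ 2 := by
    rw [← pow_add]
    exact pow_le_pow_right₀ (by exact_mod_cast hq.le) (by omega)
  rw [div_le_iff₀ (by positivity)]
  linarith

theorem rpow_div_four_mul_sq_le_ceil_rpow_pow_log {d q : ℕ} (hq : 1 < q) (hqd : q ≤ 2 * d)
    {α : ℝ} (hα : 0 ≤ α) (m : ℕ) :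
    ((m : ℝ) / (4 * d ^ 2)) ^ α ≤ ((⌈(q : ℝ) ^ α⌉₊ ^ (Nat.log q m - 1) : ℕ) : ℝ) := by
  have hq0 : (0 : ℝ) < q := by positivity
  have hsq : (q : ℝ) ^ 2 ≤ 4 * d ^ 2 := by
    have : (q : ℝ) ≤ 2 * d := by exact_mod_cast hqd
    nlinarith
  calc ((m : ℝ) / (4 * d ^ 2)) ^ α ≤ ((m : ℝ) / q ^ 2) ^ α := by gcongr
    _ ≤ ((q : ℝ) ^ (Nat.log q m - 1)) ^ α := by
        gcongr; exact Nat.cast_div_sq_le_pow_log_sub_one hq m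
    _ = ((q : ℝ) ^ α) ^ (Nat.log q m - 1) := (Real.rpow_pow_comm hq0.le _ _).symm
    _ ≤ ((⌈(q : ℝ) ^ α⌉₊ ^ (Nat.log q m - 1) : ℕ) : ℝ) := by
        push_cast; gcongr; exact Nat.le_ceil _

theorem ceil_rpow_sub_one_mul_clog_mul_log_le {d q : ℕ} (hd : 1 < d) (hdq : d ≤ q)
    (hqd : q ≤ 2 * d) {α : ℝ} (hα : 0 ≤ α) {n m : ℕ} (hn : q ≤ n) (hm : q ≤ m) :
    ((⌈(q : ℝ) ^ α⌉₊ : ℝ) - 1) * ((Nat.clog q n : ℝ) - 1) * ((Nat.log q m : ℝ) - 1) ≤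
      (2 * (d : ℝ)) ^ α * Real.logb d n * Real.logb d m := by
  have hq : 1 < q := hd.trans_le hdq
  have hdR : (1 : ℝ) < d := by exact_mod_cast hd
  have hdqR : (d : ℝ) ≤ q := by exact_mod_cast hdq
  have hqα : 0 < (q : ℝ) ^ α := by positivity
  have hh : ((⌈(q : ℝ) ^ α⌉₊ : ℝ) - 1) ≤ (2 * (d : ℝ)) ^ α := by
    have hceil := Nat.ceil_lt_add_one hqα.le
    have hmono : (q : ℝ) ^ α ≤ (2 * (d : ℝ)) ^ α :=
      Real.rpow_le_rpow (by positivity) (by exact_mod_cast hqd) hα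
    linarith
  have ha : (Nat.clog q n : ℝ) - 1 ≤ Real.logb d n :=
    (Nat.clog_sub_one_le_logb hq n).trans
      (Real.logb_le_logb_of_base_le hdR hdqR (by exact_mod_cast hq.le.trans hn))
  have hb : (Nat.log q m : ℝ) - 1 ≤ Real.logb d m :=
    calc (Nat.log q m : ℝ) - 1 ≤ Nat.log q m := by linarith
      _ ≤ Real.logb q m := Real.natLog_le_logb m q
      _ ≤ Real.logb d m :=
        Real.logb_le_logb_of_base_le hdR hdqR (by exact_mod_cast hq.le.trans hm)
  have hh0 : (0 : ℝ) ≤ (⌈(q : ℝ) ^ α⌉₊ : ℝ) - 1 :=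
    sub_nonneg.2 (Nat.one_le_cast.2 (Nat.ceil_pos.2 hqα))
  have ha0 : (0 : ℝ) ≤ (Nat.clog q n : ℝ) - 1 :=
    sub_nonneg.2 (Nat.one_le_cast.2 (Nat.clog_pos hq (by omega)))
  have hb0 : (0 : ℝ) ≤ (Nat.log q m : ℝ) - 1 :=
    sub_nonneg.2 (Nat.one_le_cast.2 (Nat.log_pos hq hm))
  exact mul_le_mul (mul_le_mul hh ha ha0 (hh0.trans hh)) hb hb0
    (mul_nonneg (hh0.trans hh) (ha0.trans ha))

theorem stmt16_general
    (hguv : ∀ h q a b : ℕ, 0 < h → IsPrimePow q → 0 < a → 0 < b →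
      ∃ E : Fin (q ^ a) → Finset (Fin (q ^ b)),
        (∀ u, (E u).card = q) ∧
        (∀ S : Finset (Fin (q ^ a)), S.card ≤ h ^ (b - 1) →
          ((q : ℝ) - ((h : ℝ) - 1) * ((a : ℝ) - 1) * ((b : ℝ) - 1)) * S.card ≤
            ((S.biUnion E).card : ℝ)))
    (d q : ℕ) (hd : 2 ≤ d)
    (hq : IsLeast {p : ℕ | (∃ k : ℕ, p = 2 ^ k) ∧ d ≤ p} q)
    (α : ℝ) (hα0 : 0 < α)
    (n m : ℕ) (hn : q ≤ n) (hm : q ≤ m) :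
    ∃ E : Fin n → Finset (Fin m),
      (∀ u, (E u).card = d) ∧
      (∀ S : Finset (Fin n), (S.card : ℝ) ≤ ((m : ℝ) / (4 * d ^ 2)) ^ α →
        ((d : ℝ) - (2 * (d : ℝ)) ^ α * Real.logb d n * Real.logb d m) * S.card ≤
          ((S.biUnion E).card : ℝ)) := by
  have hqd : q < 2 * d := lt_two_mul_of_isLeast_two_pow (by omega) hq
  obtain ⟨⟨⟨k, hqk⟩, hdq⟩, -⟩ := hq
  have hk : k ≠ 0 := by rintro rfl; omega
  have hq : 1 < q := by omega
  obtain ⟨E, hEcard, hE⟩ := hguv ⌈(q : ℝ) ^ α⌉₊ q (Nat.clog q n) (Nat.log q m)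
    (Nat.ceil_pos.2 (by positivity)) (hqk ▸ Nat.prime_two.isPrimePow.pow hk)
    (Nat.clog_pos hq (by omega)) (Nat.log_pos hq hm)
  have hna : n ≤ q ^ Nat.clog q n := Nat.le_pow_clog hq n
  have hbm : q ^ Nat.log q m ≤ m := Nat.pow_log_le_self q (by omega)
  choose F hFE hFcard using fun u : Fin n =>
    exists_subset_card_eq (s := E (Fin.castLE hna u)) (n := d) (by rw [hEcard]; exact hdq)
  refine ⟨fun u => (F u).image (Fin.castLE hbm), fun u => ?_, ?_⟩
  · rw [card_image_of_injective _ (Fin.castLE_injective hbm), hFcard]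
  have hGUV : IsExpander E ((⌈(q : ℝ) ^ α⌉₊ ^ (Nat.log q m - 1) : ℕ) : ℝ) _ :=
    fun S hS => hE S (by exact_mod_cast hS)
  have hdeleted (u : Fin n) : #((E ∘ Fin.castLE hna) u \ F u) ≤ q - d := by
    rw [comp_apply, card_sdiff_of_subset (hFE u), hEcard, hFcard]
  refine ((hGUV.comp_injective (Fin.castLE_injective hna)).of_card_sdiff_le hdeleted
    |>.image_injective (Fin.castLE_injective hbm)).mono
    (rpow_div_four_mul_sq_le_ceil_rpow_pow_log hq hqd.le hα0.le m) ?_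
  have hloss := ceil_rpow_sub_one_mul_clog_mul_log_le hd hdq hqd.le hα0.le hn hm
  push_cast [hdq]
  linarith

/-- Derivation of Corollary `guv-corollary` from the Guruswami–Umans–Vadhan expander:
assuming for every positive integer `h`, prime power `q`, and powers `n' = q^a`,
`m' = q^b` of `q` there is a `q`-left-regular `(h^{b−1}, q − (h−1)(a−1)(b−1))`-expander
on `[n'] ∪ [m']`, then for `d ≥ 2`, `q` the least power of `2` with `q ≥ d`,
any `α ∈ (0,1]` and `n, m ≥ q` there is a `d`-left-regular
`((m/(4d²))^α, d − (2d)^α (log_d n)(log_d m))`-expander on `[n] ∪ [m]`. -/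
theorem stmt16
    (hguv : ∀ h q a b : ℕ, 0 < h → IsPrimePow q → 0 < a → 0 < b →
      ∃ E : Fin (q ^ a) → Finset (Fin (q ^ b)),
        (∀ u, (E u).card = q) ∧
        (∀ S : Finset (Fin (q ^ a)), S.card ≤ h ^ (b - 1) →
          ((q : ℝ) - ((h : ℝ) - 1) * ((a : ℝ) - 1) * ((b : ℝ) - 1)) * S.card ≤
            ((S.biUnion E).card : ℝ)))
    (d q : ℕ) (hd : 2 ≤ d)
    (hq : IsLeast {p : ℕ | (∃ k : ℕ, p = 2 ^ k) ∧ d ≤ p} q)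
    (α : ℝ) (hα0 : 0 < α) (hα1 : α ≤ 1)
    (n m : ℕ) (hn : q ≤ n) (hm : q ≤ m) :
    ∃ E : Fin n → Finset (Fin m),
      (∀ u, (E u).card = d) ∧
      (∀ S : Finset (Fin n), (S.card : ℝ) ≤ ((m : ℝ) / (4 * d ^ 2)) ^ α →
        ((d : ℝ) - (2 * (d : ℝ)) ^ α * Real.logb d n * Real.logb d m) * S.card ≤
          ((S.biUnion E).card : ℝ)) :=
  stmt16_general hguv d q hd hq α hα0 n m hn hm
end
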